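/- Under the standing hypotheses (G is a finite simple C4-free graph, a, b : V(G) → ℕ satisfy a(x) ≥ 2 and b(x) ≥ 2 for all x, d_G(x) = a(x) + b(x) − 1 for every vertex x, and G has no feasible pair), for any (A, B) ∈ 𝒫: either A* or B* consists of exactly one vertex; moreover, every vertex in V(G)∖A* is adjacent to at most one vertex of B*, and every vertex in V(G)∖B* is adjacent to at most one vertex of A*. -/

import Mathlib

open Finset
open scoped Classical

variable {V : Type*}

/-- `nbrIn G A x` is the number of neighbors of `x` lying in `A`, i.e. `d_A(x)`. -/
noncomputable def nbrIn (G : SimpleGraph V) (A : Finset V) (x : V) : ℕ :=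
  (A.filter fun y => G.Adj x y).card

/-- `G` contains no cycle of length four: there are no four distinct vertices
`w,x,y,z` with `wx, xy, yz, zw` all edges. -/
def C4Free (G : SimpleGraph V) : Prop :=
  ∀ w x y z : V, w ≠ x → w ≠ y → w ≠ z → x ≠ y → x ≠ z → y ≠ z →
    ¬(G.Adj w x ∧ G.Adj x y ∧ G.Adj y z ∧ G.Adj z w)

/-- `A` is `f`-good: every vertex of `A` has at least `f u` neighbors in `A`. -/
def IsGood (G : SimpleGraph V) (f : V → ℕ) (A : Finset V) : Prop :=
  ∀ u ∈ A, f u ≤ nbrIn G A u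

/-- `A` is `g`-degenerate: every non-empty subset `H ⊆ A` has a vertex `u`
with `d_H(u) ≤ g u`. -/
def IsDegenerate (G : SimpleGraph V) (g : V → ℤ) (A : Finset V) : Prop :=
  ∀ H ⊆ A, H.Nonempty → ∃ u ∈ H, (nbrIn G H u : ℤ) ≤ g u

/-- `(A,B)` is a partition of the vertex set: disjoint, non-empty, covering. -/
def IsPartition [Fintype V] (A B : Finset V) : Prop :=
  Disjoint A B ∧ A.Nonempty ∧ B.Nonempty ∧ A ∪ B = Finset.univ

/-- `(A,B)` is a feasible pair: disjoint non-empty sets with `A` being `a`-good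
and `B` being `b`-good. -/
def FeasiblePair (G : SimpleGraph V) (a b : V → ℕ) (A B : Finset V) : Prop :=
  Disjoint A B ∧ A.Nonempty ∧ B.Nonempty ∧ IsGood G a A ∧ IsGood G b B

/-- `(A,B)` is an `(a,b)`-partition: a partition with `A` being `(a-1)`-degenerate
and `B` being `(b-1)`-degenerate. -/
def ABPartition [Fintype V] (G : SimpleGraph V) (a b : V → ℕ) (A B : Finset V) : Prop :=
  IsPartition A B ∧ IsDegenerate G (fun x => (a x : ℤ) - 1) A ∧
    IsDegenerate G (fun x => (b x : ℤ) - 1) B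

/-- The number of edges of the subgraph of `G` induced on `A`. -/
noncomputable def edgesIn (G : SimpleGraph V) (A : Finset V) : ℕ :=
  ((A ×ˢ A).filter fun p => G.Adj p.1 p.2).card / 2

/-- The weight `w(A,B) = |E(G[A])| + |E(G[B])| + Σ_{x∈A} b(x) + Σ_{x∈B} a(x)`. -/
noncomputable def weight (G : SimpleGraph V) (a b : V → ℕ) (A B : Finset V) : ℕ :=
  edgesIn G A + edgesIn G B + ∑ x ∈ A, b x + ∑ x ∈ B, a x

/-- `(A,B)` belongs to `𝒫`: it is an `(a,b)`-partition of maximum weight among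
all `(a,b)`-partitions. -/
def MaxAB [Fintype V] (G : SimpleGraph V) (a b : V → ℕ) (A B : Finset V) : Prop :=
  ABPartition G a b A B ∧
    ∀ A' B' : Finset V, ABPartition G a b A' B' → weight G a b A' B' ≤ weight G a b A B

/-- `starSet G f A` is `A* = {x ∈ A : d_A(x) ≤ f(x) - 1}`. -/
noncomputable def starSet (G : SimpleGraph V) (f : V → ℕ) (A : Finset V) : Finset V :=
  A.filter fun x => nbrIn G A x < f x

/-!
The heart of the matter is that every vertex of `A*` is adjacent to every vertex of `B*`. Moving a
vertex `x` of `A*` to the other side raises the weight by `2 (a x - d_A x) - 1 ≥ 1`, because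
`d_G = a + b - 1`. So if `u ∈ A*` and `y ∈ B*` were not adjacent, swapping them would raise the
weight (the first move does not change `d_B y`), and by maximality one side of the swapped
partition, say `A - u + y`, would contain a non-empty `a`-good set `S`. Moving `u` alone also raises
the weight, so `B + u` contains a non-empty `b`-good set `T`; it misses `y` since
`d_{B+u} y = d_B y < b y`, and `(S, T)` is a feasible pair.

Both `A*` and `B*` are non-empty by degeneracy, and in a `C4`-free graph no two vertices have two
common neighbours; applied to the complete bipartite graph between `A*` and `B*` this gives all
three claims.
-/

section Neighbours

variable (G : SimpleGraph V)

lemma nbrIn_mono {S T : Finset V} (h : S ⊆ T) (x : V) : nbrIn G S x ≤ nbrIn G T x :=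
  card_le_card (filter_subset_filter _ h)

lemma nbrIn_lt_card {H : Finset V} {u : V} (hu : u ∈ H) : nbrIn G H u < H.card := by
  have hsub : H.filter (G.Adj u) ⊆ H.erase u := fun y hy =>
    mem_erase.mpr ⟨(G.ne_of_adj (mem_filter.mp hy).2).symm, (mem_filter.mp hy).1⟩
  exact (card_le_card hsub).trans_lt (card_erase_lt_of_mem hu)

lemma nbrIn_eq_card {Y : Finset V} {x : V} (h : ∀ y ∈ Y, G.Adj x y) : nbrIn G Y x = Y.card :=
  congrArg card (filter_true_of_mem h)

lemma nbrIn_insert {A : Finset V} {u : V} (hu : u ∉ A) (x : V) :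
    nbrIn G (insert u A) x = nbrIn G A x + if G.Adj x u then 1 else 0 := by
  unfold nbrIn
  rw [filter_insert]
  split_ifs with h
  · exact card_insert_of_notMem fun hc => hu (mem_filter.mp hc).1
  · rfl

variable {G}

lemma nbrIn_insert_of_not_adj (A : Finset V) {x u : V} (h : ¬ G.Adj x u) :
    nbrIn G (insert u A) x = nbrIn G A x := by
  unfold nbrIn
  rw [filter_insert, if_neg h]

lemma nbrIn_erase_of_not_adj (A : Finset V) {x u : V} (h : ¬ G.Adj x u) :
    nbrIn G (A.erase u) x = nbrIn G A x := by
  unfold nbrIn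
  rw [filter_erase, erase_eq_of_notMem fun hc => h (mem_filter.mp hc).2]

lemma nbrIn_add_nbrIn [Fintype V] {A B : Finset V} (hd : Disjoint A B) (hU : A ∪ B = univ)
    (x : V) : nbrIn G A x + nbrIn G B x = G.degree x := by
  rw [← G.card_neighborFinset_eq_degree, SimpleGraph.neighborFinset_eq_filter, ← hU,
    filter_union, card_union_of_disjoint (disjoint_filter_filter hd)]
  rfl

end Neighbours

section Weight

variable {G : SimpleGraph V}

lemma card_adj_pairs_eq_sum_nbrIn (A : Finset V) :
    ((A ×ˢ A).filter fun p => G.Adj p.1 p.2).card = ∑ x ∈ A, nbrIn G A x := by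
  simp only [card_filter, sum_product, nbrIn]

lemma sum_nbrIn_insert {A : Finset V} {u : V} (hu : u ∉ A) :
    ∑ x ∈ insert u A, nbrIn G (insert u A) x = ∑ x ∈ A, nbrIn G A x + 2 * nbrIn G A u := by
  have hcount : ∑ x ∈ A, (if G.Adj x u then 1 else 0) = nbrIn G A u := by
    simp only [sum_boole, nbrIn, G.adj_comm, Nat.cast_id]
  simp only [sum_insert hu, nbrIn_insert G hu, sum_add_distrib, hcount, G.loopless.irrefl u,
    if_false]
  ring

lemma edgesIn_insert {A : Finset V} {u : V} (hu : u ∉ A) :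
    edgesIn G (insert u A) = edgesIn G A + nbrIn G A u := by
  unfold edgesIn
  rw [card_adj_pairs_eq_sum_nbrIn, card_adj_pairs_eq_sum_nbrIn, sum_nbrIn_insert hu]
  omega

lemma edgesIn_erase {A : Finset V} {u : V} (hu : u ∈ A) :
    edgesIn G A = edgesIn G (A.erase u) + nbrIn G A u := by
  conv_lhs => rw [← insert_erase hu]
  rw [edgesIn_insert (notMem_erase u A), nbrIn_erase_of_not_adj A (G.loopless.irrefl u)]

lemma weight_comm (a b : V → ℕ) (A B : Finset V) : weight G a b A B = weight G b a B A := by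
  unfold weight
  omega

lemma weight_erase_insert (a b : V → ℕ) {A B : Finset V} {u : V} (hu : u ∈ A) (hu' : u ∉ B) :
    weight G a b (A.erase u) (insert u B) + (nbrIn G A u + b u)
      = weight G a b A B + (nbrIn G B u + a u) := by
  have hA := edgesIn_erase (G := G) hu
  have hB := edgesIn_insert (G := G) hu'
  have hbsum := sum_erase_add A b hu
  have hasum := sum_insert (f := a) hu'
  unfold weight
  omega

lemma weight_lt_weight_erase_insert [Fintype V] {a b : V → ℕ} {A B : Finset V} {u : V}
    (hd : Disjoint A B) (hU : A ∪ B = univ) (hdeg : G.degree u + 1 = a u + b u) (hu : u ∈ A)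
    (hlt : nbrIn G A u < a u) : weight G a b A B < weight G a b (A.erase u) (insert u B) := by
  have hsplit := nbrIn_add_nbrIn (G := G) hd hU u
  have hmove := weight_erase_insert (G := G) a b hu (disjoint_left.mp hd hu)
  omega

end Weight

section Partitions

variable {G : SimpleGraph V} {a b : V → ℕ}

lemma isDegenerate_iff_forall_not_isGood {f : V → ℕ} {A : Finset V} :
    IsDegenerate G (fun x => (f x : ℤ) - 1) A ↔ ∀ T ⊆ A, T.Nonempty → ¬ IsGood G f T := by
  refine ⟨fun h T hT hne hgood => ?_, fun h H hH hne => ?_⟩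
  · obtain ⟨u, hu, hle⟩ := h T hT hne
    have := hgood u hu
    simp only at hle
    omega
  · by_contra! hlt
    exact h H hH hne fun u hu => by have := hlt u hu; omega

lemma IsDegenerate.subset {g : V → ℤ} {A S : Finset V} (h : IsDegenerate G g A) (hS : S ⊆ A) :
    IsDegenerate G g S :=
  fun H hH => h H (hH.trans hS)

lemma IsGood.lt_card {f : V → ℕ} {S : Finset V} (hS : IsGood G f S) {u : V} (hu : u ∈ S) :
    f u < S.card :=
  (hS u hu).trans_lt (nbrIn_lt_card G hu)

lemma starSet_nonempty {f : V → ℕ} {A : Finset V} (hA : A.Nonempty)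
    (hdA : IsDegenerate G (fun x => (f x : ℤ) - 1) A) : (starSet G f A).Nonempty := by
  obtain ⟨v, hv, hle⟩ := hdA A subset_rfl hA
  simp only at hle
  exact ⟨v, mem_filter.mpr ⟨hv, by omega⟩⟩

lemma not_exists_feasiblePair_swap (hnf : ¬ ∃ A B : Finset V, FeasiblePair G a b A B) :
    ¬ ∃ A B : Finset V, FeasiblePair G b a A B := by
  rintro ⟨A, B, hd, hA, hB, hgA, hgB⟩
  exact hnf ⟨B, A, hd.symm, hB, hA, hgB, hgA⟩

lemma disjoint_erase_insert {A B : Finset V} (hd : Disjoint A B) (u : V) :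
    Disjoint (A.erase u) (insert u B) :=
  disjoint_insert_right.mpr ⟨notMem_erase u A, disjoint_of_subset_left (erase_subset u A) hd⟩

variable [Fintype V]

lemma IsPartition.symm {A B : Finset V} (h : IsPartition A B) : IsPartition B A :=
  ⟨h.1.symm, h.2.2.1, h.2.1, union_comm A B ▸ h.2.2.2⟩

lemma erase_union_insert_eq_univ {A B : Finset V} (hU : A ∪ B = univ) (u : V) :
    A.erase u ∪ insert u B = univ := by
  rw [erase_union_of_mem (mem_insert_self u B), union_insert, hU, insert_eq_of_mem (mem_univ u)]

lemma IsPartition.erase_insert {A B : Finset V} (h : IsPartition A B) {u : V}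
    (hne : (A.erase u).Nonempty) : IsPartition (A.erase u) (insert u B) :=
  ⟨disjoint_erase_insert h.1 u, hne, insert_nonempty u B, erase_union_insert_eq_univ h.2.2.2 u⟩

lemma ABPartition.symm {A B : Finset V} (h : ABPartition G a b A B) : ABPartition G b a B A :=
  ⟨h.1.symm, h.2.2, h.2.1⟩

lemma MaxAB.symm {A B : Finset V} (h : MaxAB G a b A B) : MaxAB G b a B A := by
  refine ⟨h.1.symm, fun A' B' h' => ?_⟩
  rw [weight_comm b a A' B', weight_comm b a B A]
  exact h.2 B' A' h'.symm

section MaxAB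

variable (hdeg : ∀ x : V, G.degree x + 1 = a x + b x) {A B : Finset V} (hAB : MaxAB G a b A B)
include hdeg hAB

lemma MaxAB.exists_isGood_of_mem_starSet {u : V} (hu : u ∈ starSet G a A)
    (hne : (A.erase u).Nonempty) : ∃ T ⊆ insert u B, T.Nonempty ∧ IsGood G b T := by
  obtain ⟨⟨hP, hdA, -⟩, hmax⟩ := hAB
  obtain ⟨huA, hua⟩ := mem_filter.mp hu
  by_contra! hnone
  have hpart : ABPartition G a b (A.erase u) (insert u B) :=
    ⟨hP.erase_insert hne, hdA.subset (erase_subset u A),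
      isDegenerate_iff_forall_not_isGood.mpr hnone⟩
  have hlt := weight_lt_weight_erase_insert hP.1 hP.2.2.2 (hdeg u) huA hua
  exact absurd (hmax _ _ hpart) (not_le.mpr hlt)

lemma MaxAB.isDegenerate_insert_erase (ha : ∀ x, 0 < a x)
    (hnf : ¬ ∃ A B : Finset V, FeasiblePair G a b A B) {u y : V} (hu : u ∈ starSet G a A)
    (hy : y ∈ starSet G b B) (hadj : ¬ G.Adj u y) :
    IsDegenerate G (fun x => (a x : ℤ) - 1) (insert y (A.erase u)) := by
  rw [isDegenerate_iff_forall_not_isGood]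
  rintro S hS ⟨v, hv⟩ hSgood
  have hne : (A.erase u).Nonempty := by
    by_contra! hempty
    have hcard := card_le_card hS
    rw [hempty, insert_empty, card_singleton] at hcard
    have := hSgood.lt_card hv
    have := ha v
    omega
  obtain ⟨T, hT, hTne, hTgood⟩ := hAB.exists_isGood_of_mem_starSet hdeg hu hne
  have hyT : y ∉ T := fun hyT => by
    have hmono := nbrIn_mono G hT y
    rw [nbrIn_insert_of_not_adj B fun h => hadj h.symm] at hmono
    have := hTgood y hyT
    have := (mem_filter.mp hy).2
    omega
  have hST : Disjoint S T := by
    refine disjoint_of_subset_left hS (disjoint_insert_left.mpr ⟨hyT, ?_⟩)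
    exact disjoint_of_subset_right hT (disjoint_erase_insert hAB.1.1.1 u)
  exact hnf ⟨S, T, hST, ⟨v, hv⟩, hTne, hSgood, hTgood⟩

lemma MaxAB.adj_of_mem_starSet (ha : ∀ x, 0 < a x) (hb : ∀ x, 0 < b x)
    (hnf : ¬ ∃ A B : Finset V, FeasiblePair G a b A B) {u y : V} (hu : u ∈ starSet G a A)
    (hy : y ∈ starSet G b B) : G.Adj u y := by
  by_contra hadj
  obtain ⟨huA, hua⟩ := mem_filter.mp hu
  obtain ⟨hyB, hyb⟩ := mem_filter.mp hy
  obtain ⟨hd, -, -, hU⟩ := hAB.1.1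
  have huy : u ≠ y := fun h => disjoint_left.mp hd huA (h ▸ hyB)
  have hB' : (insert u B).erase y = insert u (B.erase y) := erase_insert_of_ne huy
  have hdA' := hAB.isDegenerate_insert_erase hdeg ha hnf hu hy hadj
  have hdB' := hAB.symm.isDegenerate_insert_erase (fun x => (hdeg x).trans (add_comm _ _)) hb
    (not_exists_feasiblePair_swap hnf) hy hu fun h => hadj h.symm
  have hd₁ := disjoint_erase_insert hd u
  have hU₁ := erase_union_insert_eq_univ hU u
  have hpart : ABPartition G a b (insert y (A.erase u)) (insert u (B.erase y)) := by
    refine ⟨⟨?_, insert_nonempty _ _, insert_nonempty _ _, ?_⟩, hdA', hdB'⟩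
    · exact hB' ▸ (disjoint_erase_insert hd₁.symm y).symm
    · rw [← hB', union_comm]
      exact erase_union_insert_eq_univ (union_comm (A.erase u) _ ▸ hU₁) y
  have hgain₁ := weight_lt_weight_erase_insert hd hU (hdeg u) huA hua
  have hgain₂ := weight_lt_weight_erase_insert hd₁.symm (union_comm (A.erase u) _ ▸ hU₁)
    ((hdeg y).trans (add_comm _ _)) (mem_insert_of_mem hyB)
    (by rwa [nbrIn_insert_of_not_adj B fun h => hadj h.symm])
  rw [weight_comm b a, weight_comm b a, hB'] at hgain₂
  exact absurd (hAB.2 _ _ hpart) (not_le.mpr (hgain₁.trans hgain₂))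

end MaxAB

end Partitions

lemma C4Free.nbrIn_le_one {G : SimpleGraph V} (hC4 : C4Free G) {x w : V} (hxw : x ≠ w)
    {Y : Finset V} (hw : ∀ y ∈ Y, G.Adj w y) : nbrIn G Y x ≤ 1 := by
  by_contra! h
  obtain ⟨y, hy, z, hz, hyz⟩ := one_lt_card.mp h
  obtain ⟨hyY, hxy⟩ := mem_filter.mp hy
  obtain ⟨hzY, hxz⟩ := mem_filter.mp hz
  have hwy := hw y hyY
  have hwz := hw z hzY
  exact hC4 x y w z hxy.ne hxw hxz.ne hwy.ne.symm hyz hwz.ne ⟨hxy, hwy.symm, hwz, hxz.symm⟩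

/-- Claim 5: for any `(A,B) ∈ 𝒫`, either `A*` or `B*` is a single vertex; moreover every
vertex outside `A*` has at most one neighbor in `B*` and every vertex outside `B*` has at most
one neighbor in `A*`. -/
theorem star_singleton [Fintype V] (G : SimpleGraph V) (a b : V → ℕ)
    (hC4 : C4Free G) (ha : ∀ x : V, 2 ≤ a x) (hb : ∀ x : V, 2 ≤ b x)
    (hdeg : ∀ x : V, G.degree x + 1 = a x + b x)
    (hnf : ¬ ∃ A B : Finset V, FeasiblePair G a b A B)
    (A B : Finset V) (hAB : MaxAB G a b A B) :
    ((starSet G a A).card = 1 ∨ (starSet G b B).card = 1) ∧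
    (∀ x : V, x ∉ starSet G a A → nbrIn G (starSet G b B) x ≤ 1) ∧
    (∀ x : V, x ∉ starSet G b B → nbrIn G (starSet G a A) x ≤ 1) := by
  have hadj : ∀ u ∈ starSet G a A, ∀ y ∈ starSet G b B, G.Adj u y := fun u hu y hy =>
    hAB.adj_of_mem_starSet hdeg (fun x => two_pos.trans_le (ha x))
      (fun x => two_pos.trans_le (hb x)) hnf hu hy
  obtain ⟨⟨⟨-, hA, hB, -⟩, hdA, hdB⟩, -⟩ := hAB
  obtain ⟨u, hu⟩ := starSet_nonempty hA hdA
  obtain ⟨y, hy⟩ := starSet_nonempty hB hdB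
  refine ⟨?_, fun x hx => hC4.nbrIn_le_one (ne_of_mem_of_not_mem hu hx).symm (hadj u hu),
    fun x hx => hC4.nbrIn_le_one (ne_of_mem_of_not_mem hy hx).symm fun v hv => (hadj v hv y hy).symm⟩
  rcases le_or_gt (starSet G a A).card 1 with hcard | hcard
  · exact Or.inl (le_antisymm hcard (card_pos.mpr ⟨u, hu⟩))
  · obtain ⟨v, hv, w, hw, hvw⟩ := one_lt_card.mp hcard
    have hle := hC4.nbrIn_le_one hvw (hadj w hw)
    rw [nbrIn_eq_card G (hadj v hv)] at hle
    exact Or.inr (le_antisymm hle (card_pos.mpr ⟨y, hy⟩))
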